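/- arXiv:2602.12801 — 2 statements merged into one kernel-verified Lean document; each statement's English description precedes it below -/
import Mathlib

section
/- Let α ∈ (0,1) be irrational and n ≥ 1 with L = k_0(n) ≥ 2 (or L ≥ 1 if α < 1/2). Then ‖nα‖ < ‖q_L α‖ if and only if the Ostrowski representation of n has the form n = q_L + Σ_{k=L+1+2t}^{N} b_k q_k for some t ≥ 0 with b_{L+1+2t} > 0 (i.e., the second-lowest nonzero digit occurs at an index whose parity is opposite to L). -/
/-- Gauss-map iterates of `α`. -/
noncomputable def cfFrac (α : ℝ) : ℕ → ℝ
  | 0 => α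
  | k + 1 => Int.fract (1 / cfFrac α k)

/-- Partial quotients of `α` (1-indexed, `cfA α 0 = 0` unused). -/
noncomputable def cfA (α : ℝ) : ℕ → ℕ
  | 0 => 0
  | k + 1 => (⌊1 / cfFrac α k⌋).toNat

/-- Numerators of the convergents of `α`. -/
noncomputable def cfP (α : ℝ) : ℕ → ℕ
  | 0 => 0
  | 1 => 1
  | k + 2 => cfA α (k + 2) * cfP α (k + 1) + cfP α k

/-- Denominators of the convergents of `α`. -/
noncomputable def cfQ (α : ℝ) : ℕ → ℕ
  | 0 => 1
  | 1 => cfA α 1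
  | k + 2 => cfA α (k + 2) * cfQ α (k + 1) + cfQ α k

/-- Distance from `x` to the nearest integer. -/
noncomputable def distNearInt (x : ℝ) : ℝ := min (Int.fract x) (1 - Int.fract x)

/-- `b` is the sequence of digits of an Ostrowski representation of `n` w.r.t. `α`:
`n = Σ b_k q_k` with `0 ≤ b_0 ≤ a_1 - 1`, `0 ≤ b_k ≤ a_{k+1}` for `k ≥ 1`, and
`b_{k-1} = 0` whenever `b_k = a_{k+1}`. -/
def OstrowskiRep (α : ℝ) (n : ℕ) (b : ℕ → ℕ) : Prop :=
  b 0 ≤ cfA α 1 - 1 ∧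
  (∀ k, 1 ≤ k → b k ≤ cfA α (k + 1)) ∧
  (∀ k, 1 ≤ k → b k = cfA α (k + 1) → b (k - 1) = 0) ∧
  ∃ N, (∀ k, N < k → b k = 0) ∧ n = ∑ k ∈ Finset.range (N + 1), b k * cfQ α k

/-!
Write `θ_k = q_k α - p_k = (-1)^k ‖q_k α‖`. For an Ostrowski expansion `n = Σ b_k q_k` whose
lowest nonzero digit is `b_L`, `n α` differs from an integer by the tail `T_L = Σ_{k ≥ L} b_k θ_k`,
and the digit bounds make `(-1)^m T_m` lie strictly between `(b_m - 1) ‖q_m α‖` and `‖q_{m-1} α‖`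
for every `m ≥ 1`. As `‖q_{L-1} α‖ ≤ 1/2` under the hypothesis on `L`, this gives
`‖n α‖ = (-1)^L T_L = b_L ‖q_L α‖ + (-1)^L T_{L+1}`, which is below
`‖q_L α‖` exactly when `b_L = 1` and `T_{L+1}`, whose sign is that of `θ_k` for the next nonzero
digit `b_k`, has the sign opposite to `θ_L`, i.e. when `k - L` is odd.
-/

/-- `cfErr α (k + 1) = |q_k α - p_k|` and `cfErr α 0 = 1`. -/
noncomputable def cfErr (α : ℝ) : ℕ → ℝ
  | 0 => 1
  | k + 1 => cfFrac α k * cfErr α k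

noncomputable def cfTheta (α : ℝ) (k : ℕ) : ℝ := (cfQ α k : ℝ) * α - (cfP α k : ℝ)

noncomputable def ostrowskiTail (α : ℝ) (b : ℕ → ℕ) (N m : ℕ) : ℝ :=
  ∑ k ∈ Finset.Ico m (N + 1), (b k : ℝ) * cfTheta α k

lemma distNearInt_intCast_add (p : ℤ) {s : ℝ} (hs : |s| ≤ 1 / 2) :
    distNearInt ((p : ℝ) + s) = |s| := by
  obtain ⟨hl, hr⟩ := abs_le.1 hs
  rw [distNearInt, Int.fract_intCast_add]
  rcases le_or_gt 0 s with h | h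
  · rw [Int.fract_eq_self.2 ⟨h, by linarith⟩, abs_of_nonneg h, min_eq_left (by linarith)]
  · have hfract : Int.fract s = s + 1 :=
      Int.fract_eq_iff.2 ⟨by linarith, by linarith, -1, by push_cast; ring⟩
    rw [hfract, abs_of_neg h, min_eq_right (by linarith)]
    ring

section ContinuedFraction

variable {α : ℝ}

lemma cfFrac_mem_Ioo_and_irrational (hα : α ∈ Set.Ioo (0 : ℝ) 1) (hirr : Irrational α) (k : ℕ) :
    cfFrac α k ∈ Set.Ioo (0 : ℝ) 1 ∧ Irrational (cfFrac α k) := by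
  induction k with
  | zero => exact ⟨hα, hirr⟩
  | succ k ih =>
    have hfract : Irrational (Int.fract (1 / cfFrac α k)) := by
      rw [Int.fract, one_div]
      exact ih.2.inv.sub_intCast _
    refine ⟨⟨?_, Int.fract_lt_one _⟩, hfract⟩
    exact (Int.fract_nonneg _).lt_of_ne hfract.ne_zero.symm

lemma one_le_cfA_succ (hα : α ∈ Set.Ioo (0 : ℝ) 1) (hirr : Irrational α) (k : ℕ) :
    1 ≤ cfA α (k + 1) := by
  obtain ⟨⟨h0, h1⟩, -⟩ := cfFrac_mem_Ioo_and_irrational hα hirr k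
  have hfloor : (1 : ℤ) ≤ ⌊1 / cfFrac α k⌋ :=
    Int.le_floor.2 (by rw [Int.cast_one, le_div_iff₀ h0]; linarith)
  simp only [cfA]
  omega

lemma cast_cfA_succ (hα : α ∈ Set.Ioo (0 : ℝ) 1) (hirr : Irrational α) (k : ℕ) :
    (cfA α (k + 1) : ℝ) = 1 / cfFrac α k - cfFrac α (k + 1) := by
  have h := one_le_cfA_succ hα hirr k
  simp only [cfA] at h ⊢
  have hcast : ((⌊1 / cfFrac α k⌋.toNat : ℕ) : ℝ) = ((⌊1 / cfFrac α k⌋ : ℤ) : ℝ) := by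
    exact_mod_cast Int.toNat_of_nonneg (by omega)
  rw [hcast, cfFrac, Int.fract]
  ring

lemma cfErr_pos (hα : α ∈ Set.Ioo (0 : ℝ) 1) (hirr : Irrational α) (k : ℕ) : 0 < cfErr α k := by
  induction k with
  | zero => exact one_pos
  | succ k ih => exact mul_pos (cfFrac_mem_Ioo_and_irrational hα hirr k).1.1 ih

lemma cfErr_strictAnti (hα : α ∈ Set.Ioo (0 : ℝ) 1) (hirr : Irrational α) :
    StrictAnti (cfErr α) :=
  strictAnti_nat_of_succ_lt fun k =>
    mul_lt_of_lt_one_left (cfErr_pos hα hirr k) (cfFrac_mem_Ioo_and_irrational hα hirr k).1.2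

lemma cfErr_eq_cfA_mul_add (hα : α ∈ Set.Ioo (0 : ℝ) 1) (hirr : Irrational α) (k : ℕ) :
    cfErr α k = cfA α (k + 1) * cfErr α (k + 1) + cfErr α (k + 2) := by
  have h0 := (cfFrac_mem_Ioo_and_irrational hα hirr k).1.1
  simp only [cfErr, cast_cfA_succ hα hirr k]
  field_simp
  ring

lemma two_mul_cfErr_add_two_lt (hα : α ∈ Set.Ioo (0 : ℝ) 1) (hirr : Irrational α) (k : ℕ) :
    2 * cfErr α (k + 2) < cfErr α k := by
  have ha : (1 : ℝ) ≤ cfA α (k + 1) := by exact_mod_cast one_le_cfA_succ hα hirr k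
  have hlt := cfErr_strictAnti hα hirr (Nat.lt_succ_self (k + 1))
  have hpos := cfErr_pos hα hirr (k + 1)
  nlinarith [cfErr_eq_cfA_mul_add hα hirr k]

lemma cfTheta_add_two (k : ℕ) :
    cfTheta α (k + 2) = cfA α (k + 2) * cfTheta α (k + 1) + cfTheta α k := by
  simp only [cfTheta, cfQ, cfP]
  push_cast
  ring

lemma cfTheta_eq (hα : α ∈ Set.Ioo (0 : ℝ) 1) (hirr : Irrational α) (k : ℕ) :
    cfTheta α k = (-1) ^ k * cfErr α (k + 1) := by
  induction k using Nat.twoStepInduction with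
  | zero => simp [cfTheta, cfQ, cfP, cfErr, cfFrac]
  | one =>
    have h0 := hα.1
    simp only [cfTheta, cfQ, cfP, cfErr, cast_cfA_succ hα hirr 0, cfFrac]
    field_simp
    ring
  | more k ih₀ ih₁ =>
    rw [cfTheta_add_two, ih₀, ih₁, cfErr_eq_cfA_mul_add hα hirr (k + 1)]
    ring

lemma distNearInt_cfQ_mul (hα : α ∈ Set.Ioo (0 : ℝ) 1) (hirr : Irrational α) {L : ℕ}
    (hL : 1 ≤ L) : distNearInt ((cfQ α L : ℝ) * α) = cfErr α (L + 1) := by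
  have habs : |cfTheta α L| = cfErr α (L + 1) := by
    rw [cfTheta_eq hα hirr, abs_mul, abs_neg_one_pow, one_mul,
      abs_of_pos (cfErr_pos hα hirr _)]
  have hsmall : cfErr α (L + 1) ≤ 1 / 2 := by
    have := (cfErr_strictAnti hα hirr).antitone (show 2 ≤ L + 1 by omega)
    have h2 : 2 * cfErr α 2 < 1 := two_mul_cfErr_add_two_lt hα hirr 0
    linarith
  have h := distNearInt_intCast_add (cfP α L) (habs ▸ hsmall)
  rw [Int.cast_natCast, cfTheta, add_sub_cancel] at h
  exact h.trans habs

end ContinuedFraction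

lemma cast_sum_mul_cfQ_mul_eq (α : ℝ) (b : ℕ → ℕ) (N : ℕ) :
    ((∑ k ∈ Finset.range (N + 1), b k * cfQ α k : ℕ) : ℝ) * α =
      ((∑ k ∈ Finset.range (N + 1), b k * cfP α k : ℕ) : ℝ) + ostrowskiTail α b N 0 := by
  simp only [ostrowskiTail, cfTheta, ← Finset.range_eq_Ico, Nat.cast_sum, Nat.cast_mul,
    Finset.sum_mul, ← Finset.sum_add_distrib]
  exact Finset.sum_congr rfl fun k _ => by ring

section OstrowskiTail

variable {α : ℝ} {b : ℕ → ℕ} {N : ℕ}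

lemma ostrowskiTail_eq_of_forall_eq_zero {m k : ℕ} (hmk : m ≤ k) (hk : k ≤ N + 1)
    (hgap : ∀ j, m ≤ j → j < k → b j = 0) :
    ostrowskiTail α b N m = ostrowskiTail α b N k := by
  rw [ostrowskiTail, ← Finset.sum_Ico_consecutive _ hmk hk, Finset.sum_eq_zero, zero_add]
  · rfl
  · intro j hj
    rw [Finset.mem_Ico] at hj
    rw [hgap j hj.1 hj.2, Nat.cast_zero, zero_mul]

lemma neg_one_pow_mul_ostrowskiTail_eq (hα : α ∈ Set.Ioo (0 : ℝ) 1) (hirr : Irrational α)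
    {m : ℕ} (hm : m ≤ N) :
    (-1) ^ m * ostrowskiTail α b N m =
      b m * cfErr α (m + 1) - (-1) ^ (m + 1) * ostrowskiTail α b N (m + 1) := by
  rw [ostrowskiTail, Finset.sum_eq_sum_Ico_succ_bot (by omega), cfTheta_eq hα hirr, ← ostrowskiTail]
  ring_nf
  simp

lemma ostrowskiTail_bounds (hα : α ∈ Set.Ioo (0 : ℝ) 1) (hirr : Irrational α)
    (hdig : ∀ k, 1 ≤ k → b k ≤ cfA α (k + 1)) (hzero : ∀ k, N < k → b k = 0)
    {m : ℕ} (hm : 1 ≤ m) :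
    ((b m : ℝ) - 1) * cfErr α (m + 1) < (-1) ^ m * ostrowskiTail α b N m ∧
      (-1) ^ m * ostrowskiTail α b N m < cfErr α m := by
  by_cases hmN : N < m
  · have hT : ostrowskiTail α b N m = 0 := by
      rw [ostrowskiTail, Finset.Ico_eq_empty_of_le (by omega), Finset.sum_empty]
    rw [hT, hzero m hmN, mul_zero, Nat.cast_zero, zero_sub, neg_one_mul, neg_lt_zero]
    exact ⟨cfErr_pos hα hirr _, cfErr_pos hα hirr _⟩
  · have ih := ostrowskiTail_bounds hα hirr hdig hzero (m := m + 1) (by omega)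
    rw [neg_one_pow_mul_ostrowskiTail_eq hα hirr (by omega)]
    have hbm : (b m : ℝ) ≤ cfA α (m + 1) := by exact_mod_cast hdig m hm
    have hb : (0 : ℝ) ≤ b (m + 1) := Nat.cast_nonneg _
    have hnext : -cfErr α (m + 2) < (-1) ^ (m + 1) * ostrowskiTail α b N (m + 1) :=
      lt_of_le_of_lt (by nlinarith [cfErr_pos hα hirr (m + 2)]) ih.1
    have hdigit : (b m : ℝ) * cfErr α (m + 1) ≤ cfA α (m + 1) * cfErr α (m + 1) :=
      mul_le_mul_of_nonneg_right hbm (cfErr_pos hα hirr _).le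
    constructor
    · linarith [ih.2]
    · linarith [cfErr_eq_cfA_mul_add hα hirr m]
termination_by N + 1 - m

lemma neg_one_pow_mul_ostrowskiTail_pos (hα : α ∈ Set.Ioo (0 : ℝ) 1) (hirr : Irrational α)
    (hdig : ∀ k, 1 ≤ k → b k ≤ cfA α (k + 1)) (hzero : ∀ k, N < k → b k = 0)
    {m : ℕ} (hm : 1 ≤ m) (hbm : b m ≠ 0) :
    0 < (-1) ^ m * ostrowskiTail α b N m := by
  have hb : (1 : ℝ) ≤ b m := by exact_mod_cast Nat.one_le_iff_ne_zero.2 hbm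
  refine lt_of_le_of_lt ?_ (ostrowskiTail_bounds hα hirr hdig hzero hm).1
  exact mul_nonneg (by linarith) (cfErr_pos hα hirr _).le

lemma neg_one_pow_mul_ostrowskiTail_succ_neg_iff (hα : α ∈ Set.Ioo (0 : ℝ) 1)
    (hirr : Irrational α) (hdig : ∀ k, 1 ≤ k → b k ≤ cfA α (k + 1))
    (hzero : ∀ k, N < k → b k = 0) {L k : ℕ} (hLk : L < k) (hbk : b k ≠ 0)
    (hgap : ∀ j, L < j → j < k → b j = 0) :
    (-1) ^ L * ostrowskiTail α b N (L + 1) < 0 ↔ Odd (k - L) := by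
  have hkN : k ≤ N := by by_contra h; exact hbk (hzero k (by omega))
  have hpos := neg_one_pow_mul_ostrowskiTail_pos hα hirr hdig hzero (by omega) hbk
  rw [ostrowskiTail_eq_of_forall_eq_zero hLk (by omega) fun j hj => hgap j (by omega)]
  obtain ⟨d, rfl⟩ := Nat.exists_eq_add_of_le hLk.le
  rw [Nat.add_sub_cancel_left]
  rw [pow_add, mul_assoc] at hpos
  rcases Nat.even_or_odd d with hd | hd
  · rw [hd.neg_one_pow, one_mul] at hpos
    exact iff_of_false hpos.not_gt (Nat.not_odd_iff_even.2 hd)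
  · rw [hd.neg_one_pow, neg_one_mul, mul_neg, neg_pos] at hpos
    exact iff_of_true hpos hd

lemma neg_one_pow_mul_ostrowskiTail_lt_iff (hα : α ∈ Set.Ioo (0 : ℝ) 1) (hirr : Irrational α)
    (hdig : ∀ k, 1 ≤ k → b k ≤ cfA α (k + 1)) (hzero : ∀ k, N < k → b k = 0)
    {L : ℕ} (hL1 : 1 ≤ L) (hL : b L ≠ 0) :
    (-1) ^ L * ostrowskiTail α b N L < cfErr α (L + 1) ↔
      (b L = 1 ∧ ∃ k, L < k ∧ b k ≠ 0 ∧ (∀ j, L < j → j < k → b j = 0) ∧ Odd (k - L)) := by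
  classical
  by_cases hbL : b L = 1
  · have hLN : L ≤ N := by by_contra h; exact hL (hzero L (by omega))
    rw [neg_one_pow_mul_ostrowskiTail_eq hα hirr hLN, hbL, Nat.cast_one, one_mul, pow_succ,
      mul_neg_one, neg_mul, sub_neg_eq_add, add_lt_iff_neg_left, eq_self, true_and]
    constructor
    · intro hneg
      have hex : ∃ k, L < k ∧ b k ≠ 0 := by
        by_contra! hnone
        rw [ostrowskiTail_eq_of_forall_eq_zero (k := N + 1) (by omega) le_rfl
          fun j hj _ => hnone j hj, ostrowskiTail, Finset.Ico_self, Finset.sum_empty,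
          mul_zero] at hneg
        exact hneg.false
      have hgap : ∀ j, L < j → j < Nat.find hex → b j = 0 := fun j hLj hj => by
        by_contra hbj
        exact (Nat.find_min' hex ⟨hLj, hbj⟩).not_gt hj
      obtain ⟨hLk, hbk⟩ := Nat.find_spec hex
      exact ⟨_, hLk, hbk, hgap,
        (neg_one_pow_mul_ostrowskiTail_succ_neg_iff hα hirr hdig hzero hLk hbk hgap).1 hneg⟩
    · rintro ⟨k, hLk, hbk, hgap, hodd⟩
      exact (neg_one_pow_mul_ostrowskiTail_succ_neg_iff hα hirr hdig hzero hLk hbk hgap).2 hodd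
  · have hb : (2 : ℝ) ≤ b L := by exact_mod_cast (show 2 ≤ b L by omega)
    have hlow := (ostrowskiTail_bounds hα hirr hdig hzero (N := N) hL1).1
    have hE := cfErr_pos hα hirr (L + 1)
    refine iff_of_false (fun hlt => ?_) fun h => hbL h.1
    nlinarith

end OstrowskiTail

theorem stmt10_general (α : ℝ) (hα : α ∈ Set.Ioo (0:ℝ) 1) (hirr : Irrational α)
    (n : ℕ) (b : ℕ → ℕ) (hb : OstrowskiRep α n b)
    (L : ℕ) (hL : b L ≠ 0) (hL0 : ∀ k, k < L → b k = 0)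
    (hLlow : 2 ≤ L ∨ (α < 1 / 2 ∧ 1 ≤ L)) :
    distNearInt ((n : ℝ) * α) < distNearInt ((cfQ α L : ℝ) * α) ↔
      (b L = 1 ∧ ∃ k, L < k ∧ b k ≠ 0 ∧ (∀ j, L < j → j < k → b j = 0) ∧ Odd (k - L)) := by
  obtain ⟨-, hdig, -, N, hzero, hsum⟩ := hb
  have hL1 : 1 ≤ L := by omega
  have hLN : L ≤ N := by by_contra h; exact hL (hzero L (by omega))
  have hEL : cfErr α L ≤ 1 / 2 := by
    rcases hLlow with h2 | ⟨hhalf, -⟩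
    · have := (cfErr_strictAnti hα hirr).antitone h2
      have : 2 * cfErr α 2 < 1 := two_mul_cfErr_add_two_lt hα hirr 0
      linarith
    · have : cfErr α L ≤ cfErr α 1 := (cfErr_strictAnti hα hirr).antitone hL1
      have : cfErr α 1 = α := mul_one α
      linarith
  have habs : |ostrowskiTail α b N L| = (-1) ^ L * ostrowskiTail α b N L := by
    rw [← abs_of_pos (neg_one_pow_mul_ostrowskiTail_pos hα hirr hdig hzero hL1 hL), abs_mul,
      abs_neg_one_pow, one_mul]
  have hnα : (n : ℝ) * α =
      (((∑ k ∈ Finset.range (N + 1), b k * cfP α k : ℕ) : ℤ) : ℝ) + ostrowskiTail α b N L := by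
    rw [hsum, cast_sum_mul_cfQ_mul_eq, Int.cast_natCast,
      ostrowskiTail_eq_of_forall_eq_zero (Nat.zero_le L) (by omega) fun j _ => hL0 j]
  have hsmall : |ostrowskiTail α b N L| ≤ 1 / 2 :=
    habs ▸ ((ostrowskiTail_bounds hα hirr hdig hzero hL1).2.le.trans hEL)
  rw [hnα, distNearInt_intCast_add _ hsmall, distNearInt_cfQ_mul hα hirr hL1, habs]
  exact neg_one_pow_mul_ostrowskiTail_lt_iff hα hirr hdig hzero hL1 hL

theorem stmt10 (α : ℝ) (hα : α ∈ Set.Ioo (0:ℝ) 1) (hirr : Irrational α)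
    (n : ℕ) (hn : 1 ≤ n) (b : ℕ → ℕ) (hb : OstrowskiRep α n b)
    (L : ℕ) (hL : b L ≠ 0) (hL0 : ∀ k, k < L → b k = 0)
    (hLlow : 2 ≤ L ∨ (α < 1 / 2 ∧ 1 ≤ L)) :
    distNearInt ((n : ℝ) * α) < distNearInt ((cfQ α L : ℝ) * α) ↔
      (b L = 1 ∧ ∃ k, L < k ∧ b k ≠ 0 ∧ (∀ j, L < j → j < k → b j = 0) ∧ Odd (k - L)) :=
  stmt10_general α hα hirr n b hb L hL hL0 hLlow
end

section
/- Suppose α ∈ (0,1/2) is irrational and n ≥ 1 has b_0(n) ≥ 1 in its Ostrowski representation (i.e., k_0(n) = 0). If {nα} > 1/2, then {nα} < {(n+1)α}; in particular ‖(n+1)α‖ < ‖nα‖. -/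
open Finset

section

variable {α : ℝ}

theorem irrational_cfFrac (hirr : Irrational α) (k : ℕ) : Irrational (cfFrac α k) := by
  induction k with
  | zero => exact hirr
  | succ k ih =>
    rw [cfFrac, Int.fract, one_div]
    exact ih.inv.sub_intCast _

theorem cfFrac_nonneg (hα : 0 ≤ α) : ∀ k, 0 ≤ cfFrac α k
  | 0 => hα
  | _ + 1 => Int.fract_nonneg _

theorem cfFrac_pos (hα : 0 < α) (hirr : Irrational α) (k : ℕ) : 0 < cfFrac α k :=
  (cfFrac_nonneg hα.le k).lt_of_ne' (irrational_cfFrac hirr k).ne_zero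

theorem cfFrac_succ (hα : 0 ≤ α) (k : ℕ) :
    cfFrac α (k + 1) = 1 / cfFrac α k - cfA α (k + 1) := by
  have hfloor : 0 ≤ ⌊1 / cfFrac α k⌋ :=
    Int.floor_nonneg.2 (one_div_nonneg.2 (cfFrac_nonneg hα k))
  rw [cfFrac, cfA, Int.fract, ← Int.cast_natCast, Int.toNat_of_nonneg hfloor]

noncomputable def cfEps (α : ℝ) (k : ℕ) : ℝ := ∏ i ∈ range (k + 1), cfFrac α i

theorem cfEps_zero : cfEps α 0 = α := by
  simp [cfEps, cfFrac]

theorem cfEps_succ (k : ℕ) : cfEps α (k + 1) = cfEps α k * cfFrac α (k + 1) :=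
  prod_range_succ _ _

theorem cfEps_pos (hα : 0 < α) (hirr : Irrational α) (k : ℕ) : 0 < cfEps α k :=
  prod_pos fun i _ => cfFrac_pos hα hirr i

theorem cfEps_eq_cfA_mul_add (hα : 0 ≤ α) (hirr : Irrational α) (k : ℕ) :
    cfEps α k = cfA α (k + 2) * cfEps α (k + 1) + cfEps α (k + 2) := by
  have hne : cfFrac α (k + 1) ≠ 0 := (irrational_cfFrac hirr (k + 1)).ne_zero
  rw [cfEps_succ (k + 1), cfEps_succ k, cfFrac_succ hα (k + 1)]
  field_simp
  ring

theorem cfQ_mul_sub_cfP (hα : 0 ≤ α) (hirr : Irrational α) (k : ℕ) :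
    (cfQ α k : ℝ) * α - cfP α k = (-1) ^ k * cfEps α k := by
  induction k using Nat.twoStepInduction with
  | zero => simp [cfQ, cfP, cfEps_zero]
  | one =>
    have hne : α ≠ 0 := hirr.ne_zero
    rw [cfEps_succ, cfEps_zero, cfFrac_succ hα, cfFrac]
    simp only [cfQ, cfP]
    field_simp
    ring
  | more k ih₀ ih₁ =>
    simp only [cfQ, cfP]
    push_cast
    rw [cfEps_eq_cfA_mul_add hα hirr k] at ih₀
    linear_combination ih₀ + (cfA α (k + 2) : ℝ) * ih₁

theorem alternating_tail_mem_Ioo {a b : ℕ → ℕ} {ε : ℕ → ℝ} (hε : ∀ k, 0 < ε k)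
    (hrec : ∀ k, ε k = a (k + 2) * ε (k + 1) + ε (k + 2)) (hb : ∀ k, b k ≤ a (k + 1))
    (d j : ℕ) :
    ∑ i ∈ range d, (-1) ^ i * b (j + i) * ε (j + i) ∈
      Set.Ioo (-ε j) (a (j + 1) * ε j + ε (j + 1)) := by
  induction d generalizing j with
  | zero =>
    have := mul_nonneg (Nat.cast_nonneg (α := ℝ) (a (j + 1))) (hε j).le
    simp only [range_zero, sum_empty]
    exact ⟨neg_lt_zero.2 (hε j), by linarith [hε (j + 1)]⟩
  | succ d ih =>
    have hsplit : ∑ i ∈ range (d + 1), (-1) ^ i * b (j + i) * ε (j + i) =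
        b j * ε j - ∑ i ∈ range d, (-1) ^ i * b (j + 1 + i) * ε (j + 1 + i) := by
      rw [sum_range_succ']
      simp only [pow_succ, ← add_assoc, add_right_comm j, add_zero, pow_zero]
      simp only [mul_neg, mul_one, neg_mul, sum_neg_distrib, one_mul]
      ring
    obtain ⟨hlo, hhi⟩ := ih (j + 1)
    have hεj := hrec j
    have hbj : (b j : ℝ) * ε j ≤ a (j + 1) * ε j :=
      mul_le_mul_of_nonneg_right (by exact_mod_cast hb j) (hε j).le
    rw [hsplit]
    refine ⟨?_, ?_⟩
    · have : (0 : ℝ) ≤ b j * ε j := mul_nonneg (Nat.cast_nonneg _) (hε j).le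
      linarith
    · linarith

theorem exists_int_mul_eq_add_sum (hα : 0 ≤ α) (hirr : Irrational α) {n : ℕ} (b : ℕ → ℕ)
    (s : Finset ℕ) (hn : n = ∑ k ∈ s, b k * cfQ α k) :
    ∃ P : ℤ, n * α = P + ∑ k ∈ s, (-1) ^ k * b k * cfEps α k := by
  refine ⟨∑ k ∈ s, b k * cfP α k, ?_⟩
  rw [hn]
  push_cast
  rw [sum_mul, ← sub_eq_iff_eq_add', ← sum_sub_distrib]
  refine sum_congr rfl fun k _ => ?_
  rw [mul_assoc, ← mul_sub, cfQ_mul_sub_cfP hα hirr k]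
  ring

theorem fract_mul_lt_one_sub_of_ostrowskiRep (hα : 0 < α) (hirr : Irrational α) {n : ℕ}
    {b : ℕ → ℕ} (hb : OstrowskiRep α n b) (hb0 : 1 ≤ b 0) :
    Int.fract (n * α) < 1 - α := by
  obtain ⟨hb0_le, hb_le, -, N, -, hn⟩ := hb
  have hdigits : ∀ k, b k ≤ cfA α (k + 1) := fun
    | 0 => hb0_le.trans (Nat.sub_le _ _)
    | k + 1 => hb_le (k + 1) k.succ_pos
  obtain ⟨P, hP⟩ := exists_int_mul_eq_add_sum hα.le hirr b _ hn
  set T := ∑ i ∈ range N, (-1) ^ i * (b (1 + i) : ℝ) * cfEps α (1 + i)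
  have hsum : ∑ k ∈ range (N + 1), (-1) ^ k * (b k : ℝ) * cfEps α k = b 0 * α - T := by
    rw [sum_range_succ', cfEps_zero]
    simp only [T, pow_succ, add_comm 1]
    simp only [mul_neg, mul_one, neg_mul, sum_neg_distrib, pow_zero, one_mul]
    ring
  obtain ⟨hT_lo, hT_hi⟩ := alternating_tail_mem_Ioo (cfEps_pos hα hirr)
    (cfEps_eq_cfA_mul_add hα.le hirr) hdigits N 1
  have hε₁ : cfEps α 1 = 1 - cfA α 1 * α := by
    have := cfQ_mul_sub_cfP hα.le hirr 1
    simp only [cfQ, cfP] at this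
    push_cast at this
    linarith
  have hε₀ : (cfA α 2 : ℝ) * cfEps α 1 + cfEps α 2 = α := by
    rw [← cfEps_eq_cfA_mul_add hα.le hirr 0, cfEps_zero]
  have hb0R : (1 : ℝ) ≤ b 0 := by exact_mod_cast hb0
  have hb0a1 : (b 0 : ℝ) + 1 ≤ cfA α 1 := by exact_mod_cast (by omega : b 0 + 1 ≤ cfA α 1)
  have hα_le : α ≤ b 0 * α := le_mul_of_one_le_left hα.le hb0R
  have hα_add_le : (b 0 + 1) * α ≤ cfA α 1 * α := mul_le_mul_of_nonneg_right hb0a1 hα.le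
  have hfract : Int.fract (n * α) = b 0 * α - T :=
    Int.fract_eq_iff.2 ⟨by linarith, by linarith, P, by rw [hP, hsum]; ring⟩
  linarith

end

theorem stmt11_general (α : ℝ) (hα : α ∈ Set.Ioo (0:ℝ) (1 / 2)) (hirr : Irrational α)
    (n : ℕ) (b : ℕ → ℕ) (hb : OstrowskiRep α n b) (hb0 : 1 ≤ b 0)
    (hfrac : 1 / 2 < Int.fract ((n : ℝ) * α)) :
    Int.fract ((n : ℝ) * α) < Int.fract (((n : ℝ) + 1) * α) ∧
      distNearInt (((n : ℝ) + 1) * α) < distNearInt ((n : ℝ) * α) := by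
  set f := Int.fract ((n : ℝ) * α)
  have hf_lt : f < 1 - α := fract_mul_lt_one_sub_of_ostrowskiRep hα.1 hirr hb hb0
  have hf_succ : Int.fract (((n : ℝ) + 1) * α) = f + α :=
    Int.fract_eq_iff.2 ⟨by linarith [Int.fract_nonneg ((n : ℝ) * α), hα.1], by linarith,
      ⌊(n : ℝ) * α⌋, by rw [← Int.self_sub_fract]; ring⟩
  have hdist : distNearInt ((n : ℝ) * α) = 1 - f := min_eq_right (by linarith)
  rw [hf_succ, hdist]
  exact ⟨by linarith [hα.1], (min_le_right _ _).trans_lt (by linarith [hα.1])⟩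

theorem stmt11 (α : ℝ) (hα : α ∈ Set.Ioo (0:ℝ) (1 / 2)) (hirr : Irrational α)
    (n : ℕ) (hn : 1 ≤ n) (b : ℕ → ℕ) (hb : OstrowskiRep α n b) (hb0 : 1 ≤ b 0)
    (hfrac : 1 / 2 < Int.fract ((n : ℝ) * α)) :
    Int.fract ((n : ℝ) * α) < Int.fract (((n : ℝ) + 1) * α) ∧
      distNearInt (((n : ℝ) + 1) * α) < distNearInt ((n : ℝ) * α) :=
  stmt11_general α hα hirr n b hb hb0 hfrac
end
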